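/- arXiv:1711.01997 — 4 statements merged into one kernel-verified Lean document; each statement's English description precedes it below -/
import Mathlib

section
/- Let (Ω, μ) be a finite measure space, let S : L²(μ) → L²(μ) be a continuous linear operator with Hilbert-space adjoint S*, let f, y_d ∈ L²(μ), let p > 1, α > 0, β > 0, M > 0, and suppose the function S*(Sf − y_d) is essentially bounded with essential supremum m. Define the reduced cost J(u) = (1/2)‖Su + Sf − y_d‖²_{L²} + (α/2)‖u‖²_{L²} + β ∫_Ω |u(x)|^{1/p} dμ(x). If β ≥ M^{(p−1)/p} · m, then u = 0 is a minimizer of J over the ball {u ∈ L²(μ) : |u(x)| ≤ M a.e.}; that is, J(u) ≥ J(0) for every u ∈ L²(μ) with |u(x)| ≤ M almost everywhere. -/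
/-!
Put `g = S†(S f - y_d)`. Expanding the square,
`J u - J 0 = ½‖S u‖² + (α/2)‖u‖² + ∫ u g + β ∫ |u|^{1/p}`, so it suffices that
`-∫ u g ≤ β ∫ |u|^{1/p}`. Pointwise, `|u| = |u|^{1/p} |u|^{(p-1)/p} ≤ |u|^{1/p} M^{(p-1)/p}` on the
ball, hence `|u g| ≤ M^{(p-1)/p} m |u|^{1/p} ≤ β |u|^{1/p}`.
-/

open MeasureTheory

theorem Real.self_le_rpow_mul_rpow_one_sub {x M q : ℝ} (hx : 0 ≤ x) (hxM : x ≤ M) (hq : q ≤ 1) :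
    x ≤ x ^ q * M ^ (1 - q) :=
  calc x = x ^ q * x ^ (1 - q) := by
        rw [← Real.rpow_add' hx (by norm_num), add_sub_cancel, Real.rpow_one]
    _ ≤ x ^ q * M ^ (1 - q) := by gcongr

namespace MeasureTheory

variable {Ω : Type*} [MeasurableSpace Ω] {μ : Measure Ω}

theorem ae_norm_le_of_eLpNorm_top_le {E : Type*} [NormedAddCommGroup E] {f : Ω → E} {c : ℝ}
    (hc : 0 ≤ c) (hf : eLpNorm f ⊤ μ ≤ ENNReal.ofReal c) : ∀ᵐ x ∂μ, ‖f x‖ ≤ c := by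
  rw [eLpNorm_exponent_top] at hf
  filter_upwards [enorm_ae_le_eLpNormEssSup f μ] with x hx
  rw [← ENNReal.ofReal_le_ofReal_iff hc, ofReal_norm]
  exact hx.trans hf

theorem L2.inner_apply_eq_integral_mul_adjoint (S : Lp ℝ 2 μ →L[ℝ] Lp ℝ 2 μ) (u v : Lp ℝ 2 μ) :
    inner ℝ (S u) v = ∫ x, u x * (S.adjoint v) x ∂μ := by
  rw [← ContinuousLinearMap.adjoint_inner_right, L2.inner_def]
  simp [mul_comm]

theorem neg_integral_mul_le_integral_rpow_abs [IsFiniteMeasure μ] {u g : Ω → ℝ}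
    {M c q β : ℝ} (hug : Integrable (fun x ↦ u x * g x) μ) (hu_meas : AEStronglyMeasurable u μ)
    (hu : ∀ᵐ x ∂μ, |u x| ≤ M) (hg : ∀ᵐ x ∂μ, |g x| ≤ c) (hq₀ : 0 ≤ q) (hq₁ : q ≤ 1)
    (hβ : M ^ (1 - q) * c ≤ β) :
    -∫ x, u x * g x ∂μ ≤ β * ∫ x, |u x| ^ q ∂μ := by
  have hint : Integrable (fun x ↦ |u x| ^ q) μ := by
    refine Integrable.of_bound ?_ (M ^ q) ?_
    · exact (Real.continuous_rpow_const hq₀).comp_aestronglyMeasurable hu_meas.norm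
    · filter_upwards [hu] with x hx
      rw [Real.norm_of_nonneg (by positivity)]
      gcongr
  rw [← integral_neg, ← integral_const_mul]
  refine integral_mono_ae hug.neg (hint.const_mul β) ?_
  filter_upwards [hu, hg] with x hux hgx
  calc -(u x * g x) ≤ |u x| * |g x| := (neg_le_abs _).trans (abs_mul _ _).le
    _ ≤ (|u x| ^ q * M ^ (1 - q)) * c := by
        have hu_le := Real.self_le_rpow_mul_rpow_one_sub (abs_nonneg _) hux hq₁
        exact mul_le_mul hu_le hgx (abs_nonneg _) ((abs_nonneg _).trans hu_le)
    _ = |u x| ^ q * (M ^ (1 - q) * c) := by ring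
    _ ≤ β * |u x| ^ q := by rw [mul_comm]; gcongr

theorem Lp.integral_rpow_abs_coeFn_zero {r : ENNReal} {q : ℝ} (hq : q ≠ 0) :
    ∫ x, |(0 : Lp ℝ r μ) x| ^ q ∂μ = 0 := by
  refine (integral_congr_ae ?_).trans (integral_zero Ω ℝ)
  filter_upwards [Lp.coeFn_zero ℝ r μ] with x hx
  rw [hx, Pi.zero_apply, abs_zero, Real.zero_rpow hq]

end MeasureTheory

theorem stmt_0_general {Ω : Type*} [MeasurableSpace Ω] (μ : Measure Ω) [IsFiniteMeasure μ]
    (S : Lp ℝ 2 μ →L[ℝ] Lp ℝ 2 μ) (f yd : Lp ℝ 2 μ)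
    (p α β M m : ℝ) (hp : 1 < p) (hα : 0 < α) (hβ : 0 < β)
    (hm : eLpNorm (((ContinuousLinearMap.adjoint S) (S f - yd) : Lp ℝ 2 μ) : Ω → ℝ) ⊤ μ
        = ENNReal.ofReal m)
    (hβ₀ : M ^ ((p - 1)/p) * m ≤ β)
    (J : Lp ℝ 2 μ → ℝ)
    (hJ : ∀ u : Lp ℝ 2 μ,
      J u = (1/2) * ‖S u + S f - yd‖^2 + (α/2) * ‖u‖^2
        + β * ∫ x, |u x| ^ ((1:ℝ)/p) ∂μ) :
    ∀ u : Lp ℝ 2 μ, (∀ᵐ x ∂μ, |u x| ≤ M) → J 0 ≤ J u := by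
  intro u hu
  set g := S.adjoint (S f - yd)
  have hexp : 1 - 1 / p = (p - 1) / p := by field_simp
  -- `m < 0` only forces `g = 0` a.e., so work with `max m 0`.
  have hg : ∀ᵐ x ∂μ, |g x| ≤ max m 0 :=
    ae_norm_le_of_eLpNorm_top_le (le_max_right _ _)
      (hm.trans_le (ENNReal.ofReal_le_ofReal (le_max_left _ _)))
  have hβ' : M ^ (1 - 1 / p) * max m 0 ≤ β := by
    rcases le_total 0 m with h | h
    · rwa [max_eq_left h, hexp]
    · rw [max_eq_right h, mul_zero]; exact hβ.le
  have hug : Integrable (fun x ↦ u x * g x) μ := by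
    simpa [mul_comm] using L2.integrable_inner (𝕜 := ℝ) u g
  have hsparse := neg_integral_mul_le_integral_rpow_abs hug (Lp.aestronglyMeasurable u) hu hg
    (by positivity) (div_le_one_of_le₀ hp.le (by linarith)) hβ'
  have hJ0 : J 0 = (1/2) * ‖S f - yd‖^2 := by
    rw [hJ, Lp.integral_rpow_abs_coeFn_zero (by positivity)]
    simp
  have hsq : ‖S u + S f - yd‖^2 = ‖S u‖^2 + 2 * inner ℝ (S u) (S f - yd) + ‖S f - yd‖^2 := by
    rw [add_sub_assoc, norm_add_sq_real]
  rw [hJ0, hJ u, hsq, L2.inner_apply_eq_integral_mul_adjoint]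
  nlinarith [sq_nonneg ‖S u‖, sq_nonneg ‖u‖]

theorem stmt_0 {Ω : Type*} [MeasurableSpace Ω] (μ : Measure Ω) [IsFiniteMeasure μ]
    (S : Lp ℝ 2 μ →L[ℝ] Lp ℝ 2 μ) (f yd : Lp ℝ 2 μ)
    (p α β M m : ℝ) (hp : 1 < p) (hα : 0 < α) (hβ : 0 < β) (hM : 0 < M)
    (hm : eLpNorm (((ContinuousLinearMap.adjoint S) (S f - yd) : Lp ℝ 2 μ) : Ω → ℝ) ⊤ μ
        = ENNReal.ofReal m)
    (hβ₀ : M ^ ((p - 1)/p) * m ≤ β)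
    (J : Lp ℝ 2 μ → ℝ)
    (hJ : ∀ u : Lp ℝ 2 μ,
      J u = (1/2) * ‖S u + S f - yd‖^2 + (α/2) * ‖u‖^2
        + β * ∫ x, |u x| ^ ((1:ℝ)/p) ∂μ) :
    ∀ u : Lp ℝ 2 μ, (∀ᵐ x ∂μ, |u x| ≤ M) → J 0 ≤ J u :=
  stmt_0_general μ S f yd p α β M m hp hα hβ hm hβ₀ J hJ
end

section
/- Let f : ℝ → ℝ be defined by f(x) = (1/2)(x − 3/2)² + |x|^{1/2}. Then f attains its global minimum value 9/8 at exactly the two points x = 0 and x = 1; in particular f(0) = f(1) = 9/8 and f(x) ≥ 9/8 for all x ∈ ℝ. -/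
lemma key_aux (x : ℝ) (hx : 0 ≤ x) :
    9/8 ≤ (1/2) * (x - 3/2)^2 + Real.sqrt x ∧
      ((1/2) * (x - 3/2)^2 + Real.sqrt x = 9/8 → x = 0 ∨ x = 1) := by
  set t := Real.sqrt x with htdef
  have ht0 : 0 ≤ t := Real.sqrt_nonneg x
  have ht : t ^ 2 = x := Real.sq_sqrt hx
  constructor
  · nlinarith [sq_nonneg (t - 1), mul_nonneg ht0 (sq_nonneg (t - 1)),
      mul_nonneg (mul_nonneg ht0 (sq_nonneg (t - 1))) ht0]
  · intro heq
    have h0 : t * ((t - 1)^2 * (t + 2)) = 0 := by nlinarith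
    rcases mul_eq_zero.1 h0 with h | h
    · left; rw [← ht, h]; ring
    · rcases mul_eq_zero.1 h with h | h
      · right; have : t = 1 := by nlinarith [sq_nonneg (t-1)]
        rw [← ht, this]; ring
      · exfalso; nlinarith

/-- The function `f x = (1/2)(x - 3/2)² + |x|^{1/2}` attains its global minimum value `9/8`
at exactly the two points `x = 0` and `x = 1`. -/
theorem stmt_1 (f : ℝ → ℝ) (hf : ∀ x, f x = (1/2) * (x - 3/2)^2 + |x| ^ ((1:ℝ)/2)) :
    f 0 = 9/8 ∧ f 1 = 9/8 ∧ (∀ x : ℝ, 9/8 ≤ f x) ∧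
      (∀ x : ℝ, f x = 9/8 → x = 0 ∨ x = 1) := by
  have hrw : ∀ x : ℝ, f x = (1/2) * (x - 3/2)^2 + Real.sqrt |x| := by
    intro x
    rw [hf x, Real.sqrt_eq_rpow]
  refine ⟨?_, ?_, ?_, ?_⟩
  · rw [hrw 0]; simp; norm_num
  · rw [hrw 1]; simp; norm_num
  · intro x
    rw [hrw x]
    rcases le_or_gt 0 x with hx | hx
    · rw [abs_of_nonneg hx]; exact (key_aux x hx).1
    · have h := (key_aux (-x) (by linarith)).1
      rw [abs_of_neg hx]
      nlinarith
  · intro x heq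
    rw [hrw x] at heq
    rcases le_or_gt 0 x with hx | hx
    · rw [abs_of_nonneg hx] at heq
      exact (key_aux x hx).2 heq
    · exfalso
      have h := (key_aux (-x) (by linarith)).1
      rw [abs_of_neg hx] at heq
      nlinarith
end

section
/- Let (Ω, μ) be a finite measure space, let p > 1 and γ > 0, and let h_{p,γ} be the Huber-type regularization. Then for every measurable u : Ω → ℝ with ∫_Ω |u| dμ < ∞, one has |∫_Ω h_{p,γ}(u(x))^{1/p} dμ(x) − ∫_Ω |u(x)|^{1/p} dμ(x)| ≤ μ(Ω) · γ^{−1/p} · (p^{−1/p} + 1 + ((p−1)/p)^{1/p}). In particular the regularized sparsity functional Υ_{p,γ} converges to Υ_p uniformly on L¹(μ) as γ → ∞. -/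
open MeasureTheory

/-- The Huber-type regularization of the absolute value. -/
noncomputable def huber (p γ v : ℝ) : ℝ :=
  if |v| ≤ 1/γ then γ ^ (p - 1) / p * |v| ^ p else |v| + (1/γ) * ((1 - p)/p)

private lemma rpow_add_le (a b r : ℝ) (ha : 0 ≤ a) (hb : 0 ≤ b) (hr : 0 ≤ r) (hr1 : r ≤ 1) :
    (a + b) ^ r ≤ a ^ r + b ^ r := by
  have h := NNReal.rpow_add_le_add_rpow a.toNNReal b.toNNReal hr hr1
  have h2 : ((a.toNNReal + b.toNNReal : NNReal) : ℝ) = a + b := by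
    simp [Real.coe_toNNReal _ ha, Real.coe_toNNReal _ hb]
  calc (a + b) ^ r = (((a.toNNReal + b.toNNReal : NNReal) : ℝ)) ^ r := by rw [h2]
    _ = (((a.toNNReal + b.toNNReal) ^ r : NNReal) : ℝ) := by
        rw [← NNReal.coe_rpow]
    _ ≤ (((a.toNNReal ^ r + b.toNNReal ^ r : NNReal)) : ℝ) := by exact_mod_cast h
    _ = a ^ r + b ^ r := by
        rw [NNReal.coe_add, NNReal.coe_rpow, NNReal.coe_rpow,
          Real.coe_toNNReal _ ha, Real.coe_toNNReal _ hb]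

theorem stmt_4 {Ω : Type*} [MeasurableSpace Ω] (μ : Measure Ω) [IsFiniteMeasure μ]
    (p γ : ℝ) (hp : 1 < p) (hγ : 0 < γ)
    (u : Ω → ℝ) (hu : Integrable u μ) :
    |(∫ x, (huber p γ (u x)) ^ ((1:ℝ)/p) ∂μ) - ∫ x, |u x| ^ ((1:ℝ)/p) ∂μ| ≤
      (μ Set.univ).toReal * γ ^ (-(1:ℝ)/p) *
        (p ^ (-(1:ℝ)/p) + 1 + ((p - 1)/p) ^ ((1:ℝ)/p)) := by
  have hp0 : (0:ℝ) < p := lt_trans one_pos hp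
  set r : ℝ := 1/p with hr
  have hr0 : 0 < r := by positivity
  have hr1 : r ≤ 1 := by
    rw [hr, div_le_one hp0]; exact le_of_lt hp
  set C : ℝ := p ^ (-(1:ℝ)/p) + 1 + ((p - 1)/p) ^ ((1:ℝ)/p) with hC
  set B : ℝ := γ ^ (-(1:ℝ)/p) * C with hB
  have hγr : γ ^ (-(1:ℝ)/p) = (1/γ) ^ r := by
    rw [one_div, Real.inv_rpow hγ.le, ← Real.rpow_neg hγ.le, hr, neg_div]
  have hpr : p ^ (-(1:ℝ)/p) = (1/p) ^ r := by
    rw [one_div, Real.inv_rpow hp0.le, ← Real.rpow_neg hp0.le, hr, neg_div]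
  -- pointwise facts about huber
  have hhub_nonneg : ∀ v : ℝ, 0 ≤ huber p γ v := by
    intro v
    unfold huber
    split_ifs with h
    · positivity
    · push_neg at h
      have h1 : (1/γ) * ((1-p)/p) = -((1/γ) * ((p-1)/p)) := by ring
      rw [h1]
      have h2 : (1/γ) * ((p-1)/p) ≤ (1/γ) * 1 := by
        apply mul_le_mul_of_nonneg_left _ (by positivity)
        rw [div_le_one hp0]; linarith
      have : (0:ℝ) < 1/γ := by positivity
      linarith
  -- the key pointwise bound
  have key : ∀ v : ℝ, |huber p γ v ^ r - |v| ^ r| ≤ B := by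
    intro v
    have habs : (0:ℝ) ≤ |v| := abs_nonneg v
    unfold huber
    split_ifs with h
    · -- |v| ≤ 1/γ
      have h1 : (γ ^ (p-1) / p * |v| ^ p) ^ r ≤ (1/γ) ^ r * (1/p) ^ r := by
        have hb : γ ^ (p-1) / p * |v| ^ p ≤ (1/γ) * (1/p) := by
          have hv : |v| ^ p ≤ (1/γ) ^ p :=
            Real.rpow_le_rpow habs h (le_of_lt hp0)
          have : γ ^ (p-1) / p * |v| ^ p ≤ γ ^ (p-1) / p * (1/γ) ^ p := by
            apply mul_le_mul_of_nonneg_left hv (by positivity)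
          have hpow : γ ^ (p-1) * (1/γ) ^ p = 1/γ := by
            rw [one_div, Real.inv_rpow hγ.le, ← Real.rpow_neg hγ.le, ← Real.rpow_add hγ]
            have he : p - 1 + -p = -1 := by ring
            rw [he, Real.rpow_neg_one]
          refine le_trans this (le_of_eq ?_)
          calc γ ^ (p-1) / p * (1/γ) ^ p = (γ ^ (p-1) * (1/γ) ^ p) / p := by ring
            _ = (1/γ) / p := by rw [hpow]
            _ = (1/γ) * (1/p) := by ring
        calc (γ ^ (p-1) / p * |v| ^ p) ^ r ≤ ((1/γ) * (1/p)) ^ r :=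
              Real.rpow_le_rpow (by positivity) hb (le_of_lt hr0)
          _ = (1/γ) ^ r * (1/p) ^ r := Real.mul_rpow (by positivity) (by positivity)
      have h2 : |v| ^ r ≤ (1/γ) ^ r := Real.rpow_le_rpow habs h (le_of_lt hr0)
      have hnn1 : (0:ℝ) ≤ (γ ^ (p-1) / p * |v| ^ p) ^ r := by positivity
      have hnn2 : (0:ℝ) ≤ |v| ^ r := by positivity
      have hBg : B = (1/γ) ^ r * ((1/p) ^ r + 1 + ((p-1)/p) ^ r) := by
        rw [hB, hC, hγr, hpr, hr]
      rw [hBg]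
      have hlast : (0:ℝ) ≤ ((p-1)/p) ^ r := Real.rpow_nonneg (div_nonneg (by linarith) hp0.le) r
      have hg : (0:ℝ) ≤ (1/γ) ^ r := by positivity
      have := abs_sub_abs_le_abs_sub ((γ ^ (p-1) / p * |v| ^ p) ^ r) (|v| ^ r)
      rw [abs_sub_le_iff]
      constructor <;> nlinarith
    · -- |v| > 1/γ
      push_neg at h
      set d : ℝ := (1/γ) * ((p-1)/p) with hd
      have hd0 : 0 ≤ d := by
        apply mul_nonneg (by positivity)
        apply div_nonneg (by linarith) (le_of_lt hp0)
      have heq : |v| + (1/γ) * ((1-p)/p) = |v| - d := by rw [hd]; ring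
      rw [heq]
      have hdle : d ≤ 1/γ := by
        rw [hd]
        calc (1/γ) * ((p-1)/p) ≤ (1/γ) * 1 := by
              apply mul_le_mul_of_nonneg_left _ (by positivity)
              rw [div_le_one hp0]; linarith
          _ = 1/γ := mul_one _
      have hvd : 0 ≤ |v| - d := by linarith
      have hmono : (|v| - d) ^ r ≤ |v| ^ r :=
        Real.rpow_le_rpow hvd (by linarith) (le_of_lt hr0)
      have hsub : |v| ^ r ≤ (|v| - d) ^ r + d ^ r := by
        have := rpow_add_le (|v| - d) d r hvd hd0 (le_of_lt hr0) hr1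
        calc |v| ^ r = ((|v| - d) + d) ^ r := by rw [sub_add_cancel]
          _ ≤ (|v| - d) ^ r + d ^ r := this
      have hdr : d ^ r = (1/γ) ^ r * ((p-1)/p) ^ r := by
        rw [hd]; exact Real.mul_rpow (by positivity) (by apply div_nonneg <;> linarith)
      have hBg : B = (1/γ) ^ r * ((1/p) ^ r + 1 + ((p-1)/p) ^ r) := by
        rw [hB, hC, hγr, hpr, hr]
      rw [abs_sub_le_iff]
      have hg : (0:ℝ) ≤ (1/γ) ^ r := by positivity
      have h1p : (0:ℝ) ≤ (1/p) ^ r := by positivity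
      have h1g : (0:ℝ) ≤ ((p-1)/p) ^ r := Real.rpow_nonneg (div_nonneg (by linarith) hp0.le) r
      constructor
      · have : (|v| - d) ^ r - |v| ^ r ≤ 0 := by linarith
        rw [hBg]; nlinarith
      · have : |v| ^ r - (|v| - d) ^ r ≤ d ^ r := by linarith
        rw [hBg]; nlinarith
  -- measurability
  have hum : AEMeasurable u μ := hu.aemeasurable
  have hhm : Measurable (huber p γ) := by
    unfold huber
    apply Measurable.ite
    · exact measurableSet_le (measurable_abs) measurable_const
    · exact (measurable_const.mul ((measurable_abs).pow_const p))
    · exact (measurable_abs).add measurable_const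
  have hfm : AEMeasurable (fun x => huber p γ (u x) ^ r) μ :=
    ((hhm.comp_aemeasurable hum).pow_const r)
  have hgm : AEMeasurable (fun x => |u x| ^ r) μ :=
    ((measurable_abs.comp_aemeasurable hum).pow_const r)
  -- integrability
  have hmaj : Integrable (fun x => 1 + |u x|) μ :=
    (integrable_const 1).add hu.abs
  have hglt : ∀ x, |u x| ^ r ≤ 1 + |u x| := by
    intro x
    rcases le_or_gt (|u x|) 1 with h | h
    · have := Real.rpow_le_one (abs_nonneg _) h (le_of_lt hr0)
      have := abs_nonneg (u x); linarith
    · have h1 : |u x| ^ r ≤ |u x| ^ (1:ℝ) :=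
        Real.rpow_le_rpow_of_exponent_le (le_of_lt h) hr1
      rw [Real.rpow_one] at h1
      linarith
  have hg_int : Integrable (fun x => |u x| ^ r) μ := by
    apply hmaj.mono hgm.aestronglyMeasurable
    filter_upwards with x
    rw [Real.norm_eq_abs, Real.norm_eq_abs, abs_of_nonneg (Real.rpow_nonneg (abs_nonneg _) r),
      abs_of_nonneg (by positivity : (0:ℝ) ≤ 1 + |u x|)]
    exact hglt x
  have hBnn : 0 ≤ B := by
    rw [hB, hC]
    apply mul_nonneg (by positivity)
    have : (0:ℝ) ≤ ((p-1)/p) ^ ((1:ℝ)/p) := Real.rpow_nonneg (div_nonneg (by linarith) hp0.le) _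
    positivity
  have hf_int : Integrable (fun x => huber p γ (u x) ^ r) μ := by
    apply (hmaj.add (integrable_const B)).mono hfm.aestronglyMeasurable
    filter_upwards with x
    simp only [Real.norm_eq_abs, Pi.add_apply]
    rw [abs_of_nonneg (Real.rpow_nonneg (hhub_nonneg _) r)]
    have h1 : huber p γ (u x) ^ r - |u x| ^ r ≤ B :=
      le_trans (le_abs_self _) (key (u x))
    have h2 := hglt x
    refine le_trans ?_ (le_abs_self _)
    linarith
  -- conclude
  rw [← integral_sub hf_int hg_int]
  have hfinal := norm_integral_le_of_norm_le_const
    (C := B) (f := fun x => huber p γ (u x) ^ r - |u x| ^ r) (μ := μ)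
    (Filter.Eventually.of_forall (fun x => by rw [Real.norm_eq_abs]; exact key (u x)))
  rw [Real.norm_eq_abs] at hfinal
  calc |∫ x, (huber p γ (u x) ^ r - |u x| ^ r) ∂μ| ≤ B * (μ Set.univ).toReal := hfinal
    _ = (μ Set.univ).toReal * γ ^ (-(1:ℝ)/p) * C := by rw [hB]; ring
end

section
/- Let p > 1, γ > 0, and δ_γ = γ^{(p−1)/p}/p^{1/p}. Define j : ℝ → ℝ by j(z) = δ_γ|z| − (|z| + (1/γ)(1−p)/p)^{1/p} if |z| > 1/γ, and j(z) = 0 if |z| ≤ 1/γ. Then j is differentiable at every point of ℝ, with derivative j'(z) = [δ_γ − (1/p)(|z| + (1/γ)(1−p)/p)^{(1−p)/p}]·sign(z) if |z| > 1/γ and j'(z) = 0 if |z| ≤ 1/γ; moreover this derivative is a continuous function of z, so j is continuously differentiable. -/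
/-- `δ_γ = γ^{(p-1)/p} / p^{1/p}`. -/
noncomputable def deltaGamma (p γ : ℝ) : ℝ := γ ^ ((p - 1)/p) / p ^ ((1:ℝ)/p)

/-- The DC-component `j`. -/
noncomputable def jfun (p γ z : ℝ) : ℝ :=
  if |z| ≤ 1/γ then 0 else deltaGamma p γ * |z| - (|z| + (1/γ) * ((1 - p)/p)) ^ ((1:ℝ)/p)

/-- The claimed derivative of `j`. -/
noncomputable def jderiv (p γ z : ℝ) : ℝ :=
  if |z| ≤ 1/γ then 0
  else (deltaGamma p γ - (1/p) * (|z| + (1/γ) * ((1 - p)/p)) ^ ((1 - p)/p)) * Real.sign z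

/-!
Write `c = (1/γ)(1-p)/p` and `G(s) = δ_γ s - (s + c)^{1/p}`. Since `1/γ + c = 1/(γp)`,
the constant `δ_γ = (1/p)(1/(γp))^{(1-p)/p}` is exactly the one making
`G(1/γ) = G'(1/γ) = 0`. Hence `j(z) = G(max |z| (1/γ))`, and clamping from below at `1/γ`
keeps `G` differentiable, with the continuous derivative `G'(max s (1/γ))`. Composing with
`|·|` gives the derivative of `j` away from `0`; near `0` both `j` and the claimed derivative
vanish identically.
-/

open Filter Topology

theorem Real.sign_eq_coe_signType_sign (r : ℝ) : Real.sign r = (SignType.sign r : ℝ) := by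
  rcases lt_trichotomy r 0 with h | rfl | h
  · simp [Real.sign_of_neg h, h]
  · simp
  · simp [Real.sign_of_pos h, h]

theorem hasDerivAt_comp_max_const {f f' : ℝ → ℝ} {a : ℝ}
    (hf : ∀ t, a ≤ t → HasDerivAt f (f' t) t) (ha : f' a = 0) (t : ℝ) :
    HasDerivAt (fun s => f (max s a)) (f' (max t a)) t := by
  rcases lt_trichotomy t a with ht | rfl | ht
  · have hconst : (fun s => f (max s a)) =ᶠ[𝓝 t] fun _ => f a := by
      filter_upwards [eventually_lt_nhds ht] with s hs
      rw [max_eq_right hs.le]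
    rw [max_eq_right ht.le, ha]
    exact (hasDerivAt_const t (f a)).congr_of_eventuallyEq hconst
  · have hleft : HasDerivWithinAt (fun s => f (max s t)) 0 (Set.Iic t) t :=
      (hasDerivWithinAt_const t _ (f t)).congr (fun s hs => by rw [max_eq_right hs]) (by simp)
    have hright : HasDerivWithinAt (fun s => f (max s t)) 0 (Set.Ici t) t :=
      ha ▸ (hf t le_rfl).hasDerivWithinAt.congr (fun s hs => by rw [max_eq_left hs]) (by simp)
    rw [max_self, ha]
    simpa only [Set.Iic_union_Ici, hasDerivWithinAt_univ] using hleft.union hright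
  · have hid : (fun s => f (max s a)) =ᶠ[𝓝 t] f := by
      filter_upwards [eventually_gt_nhds ht] with s hs
      rw [max_eq_left hs.le]
    rw [max_eq_left ht.le]
    exact (hf t ht.le).congr_of_eventuallyEq hid

section
variable {p γ : ℝ}

theorem one_div_add_one_div_mul_one_sub_div (hp : p ≠ 0) :
    1/γ + 1/γ * ((1 - p)/p) = 1/(γ*p) := by
  field_simp; ring

theorem deltaGamma_eq (hp : 0 < p) (hγ : 0 < γ) :
    deltaGamma p γ = 1/p * (1/(γ*p)) ^ ((1 - p)/p) := by
  have hexp : (1 - p)/p = -(1 - 1/p) := by field_simp; ring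
  rw [deltaGamma, hexp, Real.rpow_neg (by positivity), one_div (γ*p),
    Real.inv_rpow (by positivity), inv_inv, Real.mul_rpow hγ.le hp.le, Real.rpow_sub hp,
    Real.rpow_one, show (p - 1)/p = 1 - 1/p by field_simp]
  field_simp

theorem deltaGamma_mul_one_div (hp : 0 < p) (hγ : 0 < γ) :
    deltaGamma p γ * (1/γ) = (1/(γ*p)) ^ ((1:ℝ)/p) := by
  rw [show (1:ℝ)/p = 1 + (1 - p)/p by field_simp; ring, Real.rpow_add (by positivity),
    Real.rpow_one, deltaGamma_eq hp hγ]
  field_simp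

/-- The function `G`: the branch of `j` on `1/γ < |z|`, in the variable `s = |z|`. -/
noncomputable def jOuter (p γ s : ℝ) : ℝ :=
  deltaGamma p γ * s - (s + 1/γ * ((1 - p)/p)) ^ ((1:ℝ)/p)

noncomputable def jOuterDeriv (p γ s : ℝ) : ℝ :=
  deltaGamma p γ - 1/p * (s + 1/γ * ((1 - p)/p)) ^ ((1 - p)/p)

theorem hasDerivAt_jOuter (hp : p ≠ 0) {s : ℝ} (hs : 0 < s + 1/γ * ((1 - p)/p)) :
    HasDerivAt (jOuter p γ) (jOuterDeriv p γ s) s := by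
  have hpow := ((hasDerivAt_id s).add_const (1/γ * ((1 - p)/p))).rpow_const
    (p := 1/p) (Or.inl hs.ne')
  rw [show 1/p - 1 = (1 - p)/p by field_simp, one_mul] at hpow
  exact (((hasDerivAt_id s).const_mul (deltaGamma p γ)).sub hpow).congr_deriv
    (by simp [jOuterDeriv])

theorem jOuter_one_div (hp : 0 < p) (hγ : 0 < γ) : jOuter p γ (1/γ) = 0 := by
  rw [jOuter, one_div_add_one_div_mul_one_sub_div hp.ne', deltaGamma_mul_one_div hp hγ, sub_self]

theorem jOuterDeriv_one_div (hp : 0 < p) (hγ : 0 < γ) : jOuterDeriv p γ (1/γ) = 0 := by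
  rw [jOuterDeriv, one_div_add_one_div_mul_one_sub_div hp.ne', deltaGamma_eq hp hγ, sub_self]

theorem jfun_eq_jOuter_max (hp : 0 < p) (hγ : 0 < γ) (z : ℝ) :
    jfun p γ z = jOuter p γ (max |z| (1/γ)) := by
  by_cases hz : |z| ≤ 1/γ
  · rw [jfun, if_pos hz, max_eq_right hz, jOuter_one_div hp hγ]
  · rw [jfun, if_neg hz, max_eq_left (not_le.mp hz).le, jOuter]

theorem jderiv_eq_jOuterDeriv_max (hp : 0 < p) (hγ : 0 < γ) (z : ℝ) :
    jderiv p γ z = jOuterDeriv p γ (max |z| (1/γ)) * SignType.sign z := by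
  by_cases hz : |z| ≤ 1/γ
  · rw [jderiv, if_pos hz, max_eq_right hz, jOuterDeriv_one_div hp hγ, zero_mul]
  · rw [jderiv, if_neg hz, max_eq_left (not_le.mp hz).le, jOuterDeriv,
      Real.sign_eq_coe_signType_sign]

theorem add_one_div_mul_one_sub_div_pos (hp : 0 < p) (hγ : 0 < γ) {s : ℝ} (hs : 1/γ ≤ s) :
    0 < s + 1/γ * ((1 - p)/p) := by
  have hb := one_div_add_one_div_mul_one_sub_div (γ := γ) hp.ne'
  have : 0 < 1/(γ*p) := by positivity
  linarith

theorem hasDerivAt_jOuter_max (hp : 0 < p) (hγ : 0 < γ) (t : ℝ) :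
    HasDerivAt (fun s => jOuter p γ (max s (1/γ))) (jOuterDeriv p γ (max t (1/γ))) t :=
  hasDerivAt_comp_max_const
    (fun _ hs => hasDerivAt_jOuter hp.ne' (add_one_div_mul_one_sub_div_pos hp hγ hs))
    (jOuterDeriv_one_div hp hγ) t

theorem continuous_jOuterDeriv_max (hp : 0 < p) (hγ : 0 < γ) :
    Continuous fun s => jOuterDeriv p γ (max s (1/γ)) :=
  continuous_const.sub <| continuous_const.mul <|
    ((continuous_id.max continuous_const).add continuous_const).rpow_const
      fun s => Or.inl (add_one_div_mul_one_sub_div_pos hp hγ (le_max_right s _)).ne'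

end

theorem stmt_6 (p γ : ℝ) (hp : 1 < p) (hγ : 0 < γ) :
    (∀ z : ℝ, HasDerivAt (jfun p γ) (jderiv p γ z) z) ∧ Continuous (jderiv p γ) := by
  have hp0 : 0 < p := one_pos.trans hp
  have hjfun : jfun p γ = fun z => jOuter p γ (max |z| (1/γ)) :=
    funext (jfun_eq_jOuter_max hp0 hγ)
  have hjderiv : jderiv p γ = fun z => jOuterDeriv p γ (max |z| (1/γ)) * SignType.sign z :=
    funext (jderiv_eq_jOuterDeriv_max hp0 hγ)
  have hsmall : ∀ᶠ z in 𝓝 (0:ℝ), |z| ≤ 1/γ := by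
    filter_upwards [Metric.closedBall_mem_nhds (0:ℝ) (one_div_pos.mpr hγ)] with z hz
    simpa using Metric.mem_closedBall.mp hz
  have hjderiv_zero : jderiv p γ 0 = 0 := by simp [hjderiv]
  constructor
  · intro z
    rcases eq_or_ne z 0 with rfl | hz
    · rw [hjderiv_zero]
      refine (hasDerivAt_const (0:ℝ) (0:ℝ)).congr_of_eventuallyEq ?_
      filter_upwards [hsmall] with z hz
      rw [jfun, if_pos hz]
    · rw [hjfun, hjderiv]
      exact (hasDerivAt_jOuter_max hp0 hγ |z|).comp z (hasDerivAt_abs hz)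
  · refine continuous_iff_continuousAt.mpr fun z => ?_
    rcases eq_or_ne z 0 with rfl | hz
    · have hzero : (fun _ => 0) =ᶠ[𝓝 (0:ℝ)] jderiv p γ := by
        filter_upwards [hsmall] with z hz
        rw [jderiv, if_pos hz]
      exact continuousAt_const.congr hzero
    · rw [hjderiv]
      exact ((continuous_jOuterDeriv_max hp0 hγ).comp continuous_abs).continuousAt.mul
        ((continuous_of_discreteTopology (f := ((↑) : SignType → ℝ))).continuousAt.comp
          (continuousAt_sign_of_ne_zero hz))
end
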